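/- Consider a repetitive process y_k = G u_k + w + d_k with G ∈ ℝ^{m×n}, w, r ∈ ℝ^m, and disturbances d_k ∈ D, where D ⊆ ℝ^m is bounded. Let M ∈ ℝ^{m×n}, Q ∈ ℝ^{m×m} symmetric positive semidefinite, R ∈ ℝ^{n×n} symmetric positive semidefinite, define H = GᵀQG + R, f = GᵀQ(w − r), H̃ = MᵀQG + R, f̃ = MᵀQ(w − r), F̃(u) = H̃u + f̃, and let W ∈ ℝ^{n×n} be symmetric positive definite. Suppose μ̃ > 0 and L̃ > 0 satisfy μ̃‖d‖_W² ≤ dᵀH̃d and ‖W^{-1}H̃d‖_W ≤ L̃‖d‖_W for all d ∈ ℝ^n, and α ∈ (0, 2μ̃/L̃²). Let X ⊆ ℝ^n be a nonempty closed convex set, let ū ∈ X satisfy ⟨F̃(ū), v − ū⟩ ≥ 0 for all v ∈ X, let u* ∈ X satisfy ⟨Hu* + f, v − u*⟩ ≥ 0 for all v ∈ X, and generate iterates by u_0 ∈ X and u_{k+1} = the W-weighted projection onto X of u_k − αW^{-1}(F̃(u_k) + MᵀQ d_k). Then for all k ≥ 0, ‖u_k − u*‖_W ≤ η^k‖u_0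 − ū‖_W + γ · sup_{j≥0}‖d_j‖ + δ, where η = √(1 − 2αμ̃ + α²L̃²) ∈ [0,1), γ = α‖W^{-1/2}MᵀQ‖/(1 − η), and δ = (1/μ̃)‖W^{-1/2}(G − M)ᵀQ(Gu* + w − r)‖. -/

import Mathlib

/-!
Write `W = S²` with `S` symmetric: `x ↦ S x` is an isometry from `‖·‖_W` onto the Euclidean
norm, so the `W`-weighted projection onto `X` becomes the Euclidean projection onto `S(X)`, and
the variational inequality characterising `ū` makes it a fixed point of the undisturbed projected
gradient step. Projections are nonexpansive, and strong monotonicity with the Lipschitz bound make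
`e ↦ e - α W⁻¹ H̃ e` an `η`-contraction in `‖·‖_W`, so `a k = ‖u k - ū‖_W` obeys
`a (k+1) ≤ η a k + α ‖S⁻¹ MᵀQ‖ sup_j ‖d j‖`, which unrolls to the geometric bound. Subtracting
the two variational inequalities and using strong monotonicity of `H̃` once more bounds
`‖ū - u*‖_W` by `δ`, since `F(u*) - F̃(u*) = (G - M)ᵀQ(Gu* + w - r)`.
-/

open Matrix Finset

/-- Weighted inner product ⟨x,y⟩_W = xᵀWy. -/
noncomputable def wip {n : ℕ} (W : Matrix (Fin n) (Fin n) ℝ) (x y : Fin n → ℝ) : ℝ :=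
  x ⬝ᵥ W.mulVec y

/-- Weighted norm ‖x‖_W = √(xᵀWx). -/
noncomputable def wnorm {n : ℕ} (W : Matrix (Fin n) (Fin n) ℝ) (x : Fin n → ℝ) : ℝ :=
  Real.sqrt (x ⬝ᵥ W.mulVec x)

/-- Euclidean norm ‖x‖ = √(xᵀx). -/
noncomputable def enorm' {n : ℕ} (x : Fin n → ℝ) : ℝ := Real.sqrt (x ⬝ᵥ x)

/-- Operator 2-norm of a matrix. -/
noncomputable def opNorm {m n : ℕ} (A : Matrix (Fin m) (Fin n) ℝ) : ℝ :=
  ‖LinearMap.toContinuousLinearMap (Matrix.toEuclideanLin A)‖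

open RealInnerProductSpace

theorem sqrt_contraction_lt_one {μ L α : ℝ} (hα : 0 < α) (hL : 0 < L)
    (hαμ : α < 2 * μ / L ^ 2) :
    √(1 - 2 * α * μ + α ^ 2 * L ^ 2) < 1 := by
  rw [Real.sqrt_lt' one_pos]
  have : α * L ^ 2 < 2 * μ := (lt_div_iff₀ (by positivity)).1 hαμ
  nlinarith

theorem le_pow_mul_add_div_of_le_mul_add {a : ℕ → ℝ} {η c : ℝ} (hη0 : 0 ≤ η) (hη1 : η < 1)
    (hc : 0 ≤ c) (h : ∀ k, a (k + 1) ≤ η * a k + c) (k : ℕ) : a k ≤ η ^ k * a 0 + c / (1 - η) := by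
  induction k with
  | zero =>
    have : 0 ≤ c / (1 - η) := div_nonneg hc (by linarith)
    simpa
  | succ k ih =>
    calc a (k + 1) ≤ η * a k + c := h k
      _ ≤ η * (η ^ k * a 0 + c / (1 - η)) + c := by gcongr
      _ = η ^ (k + 1) * a 0 + c / (1 - η) := by
          field_simp [(by linarith : 1 - η ≠ 0)]
          ring

section InnerProductSpace
variable {E : Type*} [NormedAddCommGroup E] [InnerProductSpace ℝ E]

theorem real_inner_sub_le_zero_of_forall_norm_le {K : Set E} (hK : Convex ℝ K) {x p : E}
    (hp : p ∈ K) (hmin : ∀ v ∈ K, ‖p - x‖ ≤ ‖v - x‖) : ∀ v ∈ K, ⟪x - p, v - p⟫ ≤ 0 := by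
  have : Nonempty K := ⟨⟨p, hp⟩⟩
  refine (norm_eq_iInf_iff_real_inner_le_zero hK hp).1 (le_antisymm ?_ ?_)
  · refine le_ciInf fun v => ?_
    rw [norm_sub_rev x, norm_sub_rev x]
    exact hmin v v.2
  · exact ciInf_le ⟨0, Set.forall_mem_range.2 fun _ => norm_nonneg _⟩ (⟨p, hp⟩ : K)

/-- Firm nonexpansiveness of projections, in the form of its two variational inequalities. -/
theorem norm_sub_le_of_real_inner_sub_le_zero {x y p q : E} (hp : ⟪x - p, q - p⟫ ≤ 0)
    (hq : ⟪y - q, p - q⟫ ≤ 0) : ‖p - q‖ ≤ ‖x - y‖ := by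
  have key : ‖p - q‖ ^ 2 ≤ ‖x - y‖ * ‖p - q‖ := by
    calc ‖p - q‖ ^ 2 = ⟪x - y, p - q⟫ + ⟪x - p, q - p⟫ + ⟪y - q, p - q⟫ := by
          rw [← real_inner_self_eq_norm_sq]
          simp only [inner_sub_left, inner_sub_right, real_inner_comm]
          ring
      _ ≤ ‖x - y‖ * ‖p - q‖ := by linarith [real_inner_le_norm (x - y) (p - q)]
  rcases (norm_nonneg (p - q)).eq_or_lt with h | h
  · rw [← h]; exact norm_nonneg _
  · nlinarith

theorem norm_sub_smul_le_sqrt_mul_norm {μ L α : ℝ} {e g : E} (hα : 0 ≤ α)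
    (hmono : μ * ‖e‖ ^ 2 ≤ ⟪e, g⟫) (hlip : ‖g‖ ≤ L * ‖e‖) :
    ‖e - α • g‖ ≤ √(1 - 2 * α * μ + α ^ 2 * L ^ 2) * ‖e‖ := by
  have hg : ‖g‖ ^ 2 ≤ (L * ‖e‖) ^ 2 := pow_le_pow_left₀ (norm_nonneg g) hlip 2
  have hsq : ‖e - α • g‖ ^ 2 ≤ (1 - 2 * α * μ + α ^ 2 * L ^ 2) * ‖e‖ ^ 2 := by
    rw [norm_sub_sq_real, inner_smul_right, norm_smul, Real.norm_of_nonneg hα]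
    nlinarith [mul_le_mul_of_nonneg_left hmono hα, sq_nonneg α]
  calc ‖e - α • g‖ = √(‖e - α • g‖ ^ 2) := (Real.sqrt_sq (norm_nonneg _)).symm
    _ ≤ √((1 - 2 * α * μ + α ^ 2 * L ^ 2) * ‖e‖ ^ 2) := Real.sqrt_le_sqrt hsq
    _ = _ := by rw [Real.sqrt_mul' _ (sq_nonneg _), Real.sqrt_sq (norm_nonneg _)]

end InnerProductSpace

theorem enorm'_eq_norm {n : ℕ} (x : Fin n → ℝ) :
    enorm' x = ‖(WithLp.toLp 2 x : EuclideanSpace ℝ (Fin n))‖ := by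
  rw [norm_eq_sqrt_real_inner, EuclideanSpace.inner_toLp_toLp, enorm', dotProduct_comm]
  rfl

theorem enorm'_mulVec_le {m n : ℕ} (A : Matrix (Fin m) (Fin n) ℝ) (x : Fin n → ℝ) :
    enorm' (A *ᵥ x) ≤ opNorm A * enorm' x := by
  rw [enorm'_eq_norm, enorm'_eq_norm]
  exact (LinearMap.toContinuousLinearMap (Matrix.toEuclideanLin A)).le_opNorm _

theorem bddAbove_range_enorm' {m : ℕ} {D : Set (Fin m → ℝ)} (hD : Bornology.IsBounded D)
    {d : ℕ → Fin m → ℝ} (hd : ∀ k, d k ∈ D) : BddAbove (Set.range fun k => enorm' (d k)) := by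
  obtain ⟨C, hC⟩ :=
    ((EuclideanSpace.equiv (Fin m) ℝ).symm.lipschitz.isBounded_image hD).exists_norm_le
  refine ⟨C, Set.forall_mem_range.2 fun k => ?_⟩
  rw [enorm'_eq_norm]
  exact hC _ ⟨d k, hd k, rfl⟩

section Weighted
variable {n m : ℕ}

noncomputable def euclideanMulVec (S : Matrix (Fin n) (Fin n) ℝ) :
    (Fin n → ℝ) →ₗ[ℝ] EuclideanSpace ℝ (Fin n) :=
  (WithLp.linearEquiv 2 ℝ (Fin n → ℝ)).symm.toLinearMap ∘ₗ S.mulVecLin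

@[simp]
theorem euclideanMulVec_apply (S : Matrix (Fin n) (Fin n) ℝ) (x : Fin n → ℝ) :
    euclideanMulVec S x = WithLp.toLp 2 (S *ᵥ x) := rfl

variable {S W : Matrix (Fin n) (Fin n) ℝ}

theorem dotProduct_mulVec_eq_inner (hS : Sᵀ = S) (hSW : S * S = W) (x y : Fin n → ℝ) :
    x ⬝ᵥ W *ᵥ y = ⟪euclideanMulVec S x, euclideanMulVec S y⟫ := by
  rw [euclideanMulVec_apply, euclideanMulVec_apply, EuclideanSpace.inner_toLp_toLp, star_trivial,
    ← hSW, ← mulVec_mulVec, dotProduct_mulVec x S, ← mulVec_transpose, hS, dotProduct_comm]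

theorem wnorm_eq_norm (hS : Sᵀ = S) (hSW : S * S = W) (x : Fin n → ℝ) :
    wnorm W x = ‖euclideanMulVec S x‖ := by
  rw [wnorm, dotProduct_mulVec_eq_inner hS hSW, norm_eq_sqrt_real_inner]

theorem wnorm_add_le (hS : Sᵀ = S) (hSW : S * S = W) (x y : Fin n → ℝ) :
    wnorm W (x + y) ≤ wnorm W x + wnorm W y := by
  simpa only [wnorm_eq_norm hS hSW, map_add] using norm_add_le _ _

theorem wnorm_smul (hS : Sᵀ = S) (hSW : S * S = W) (c : ℝ) (x : Fin n → ℝ) :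
    wnorm W (c • x) = |c| * wnorm W x := by
  simp only [wnorm_eq_norm hS hSW, map_smul, norm_smul, Real.norm_eq_abs]

theorem euclideanMulVec_inv_mulVec (hS : IsUnit S.det) (hSW : S * S = W) (g : Fin n → ℝ) :
    euclideanMulVec S (W⁻¹ *ᵥ g) = WithLp.toLp 2 (S⁻¹ *ᵥ g) := by
  rw [euclideanMulVec_apply, mulVec_mulVec, ← hSW, Matrix.mul_inv_rev, ← Matrix.mul_assoc,
    mul_nonsing_inv _ hS, Matrix.one_mul]

theorem inner_toLp_inv_mulVec (hS : Sᵀ = S) (hSdet : IsUnit S.det) (g v : Fin n → ℝ) :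
    ⟪(WithLp.toLp 2 (S⁻¹ *ᵥ g) : EuclideanSpace ℝ (Fin n)), euclideanMulVec S v⟫ = g ⬝ᵥ v := by
  rw [euclideanMulVec_apply, EuclideanSpace.inner_toLp_toLp, star_trivial, dotProduct_mulVec,
    ← vecMul_transpose, hS, vecMul_vecMul, mul_nonsing_inv _ hSdet, vecMul_one, dotProduct_comm]

theorem inner_euclideanMulVec_inv_mulVec (hS : Sᵀ = S) (hSdet : IsUnit S.det) (hSW : S * S = W)
    (g v : Fin n → ℝ) :
    ⟪euclideanMulVec S (W⁻¹ *ᵥ g), euclideanMulVec S v⟫ = g ⬝ᵥ v := by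
  rw [euclideanMulVec_inv_mulVec hSdet hSW, inner_toLp_inv_mulVec hS hSdet]

theorem inner_le_zero_of_forall_wnorm_le (hS : Sᵀ = S) (hSW : S * S = W)
    {X : Set (Fin n → ℝ)} (hX : Convex ℝ X) {x p : Fin n → ℝ} (hp : p ∈ X)
    (hmin : ∀ v ∈ X, wnorm W (p - x) ≤ wnorm W (v - x)) {v : Fin n → ℝ} (hv : v ∈ X) :
    ⟪euclideanMulVec S (x - p), euclideanMulVec S (v - p)⟫ ≤ 0 := by
  have hmin' : ∀ y ∈ euclideanMulVec S '' X,
      ‖euclideanMulVec S p - euclideanMulVec S x‖ ≤ ‖y - euclideanMulVec S x‖ := by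
    rintro _ ⟨v, hv, rfl⟩
    simpa only [wnorm_eq_norm hS hSW, map_sub] using hmin v hv
  simpa only [map_sub] using real_inner_sub_le_zero_of_forall_norm_le (hX.linear_image _)
    (Set.mem_image_of_mem _ hp) hmin' _ (Set.mem_image_of_mem _ hv)

theorem wnorm_inv_mulVec_mulVec_le (hS : Sᵀ = S) (hSdet : IsUnit S.det) (hSW : S * S = W)
    (B : Matrix (Fin n) (Fin m) ℝ) (d : Fin m → ℝ) :
    wnorm W (W⁻¹ *ᵥ (B *ᵥ d)) ≤ opNorm (S⁻¹ * B) * enorm' d := by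
  rw [wnorm_eq_norm hS hSW, euclideanMulVec_inv_mulVec hSdet hSW, mulVec_mulVec, ← enorm'_eq_norm]
  exact enorm'_mulVec_le _ _

theorem wnorm_sub_smul_inv_mulVec_le (hS : Sᵀ = S) (hSdet : IsUnit S.det) (hSW : S * S = W)
    {A : Matrix (Fin n) (Fin n) ℝ} {μ L α : ℝ} (hα : 0 ≤ α)
    (hmono : ∀ e, μ * wnorm W e ^ 2 ≤ e ⬝ᵥ A *ᵥ e)
    (hlip : ∀ e, wnorm W (W⁻¹ *ᵥ (A *ᵥ e)) ≤ L * wnorm W e) (e : Fin n → ℝ) :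
    wnorm W (e - α • W⁻¹ *ᵥ (A *ᵥ e)) ≤ √(1 - 2 * α * μ + α ^ 2 * L ^ 2) * wnorm W e := by
  have hinner : e ⬝ᵥ A *ᵥ e = ⟪euclideanMulVec S e, euclideanMulVec S (W⁻¹ *ᵥ (A *ᵥ e))⟫ := by
    rw [real_inner_comm, inner_euclideanMulVec_inv_mulVec hS hSdet hSW, dotProduct_comm]
  have hmono' := hmono e
  rw [hinner] at hmono'
  simp only [wnorm_eq_norm hS hSW, map_sub, map_smul] at hmono' hlip ⊢
  exact norm_sub_smul_le_sqrt_mul_norm hα hmono' (hlip e)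

theorem wnorm_step_sub_le (hS : Sᵀ = S) (hSdet : IsUnit S.det) (hSW : S * S = W)
    {A : Matrix (Fin n) (Fin n) ℝ} {b : Fin n → ℝ} {B : Matrix (Fin n) (Fin m) ℝ} {μ L α : ℝ}
    (hα : 0 ≤ α) (hmono : ∀ e, μ * wnorm W e ^ 2 ≤ e ⬝ᵥ A *ᵥ e)
    (hlip : ∀ e, wnorm W (W⁻¹ *ᵥ (A *ᵥ e)) ≤ L * wnorm W e)
    {X : Set (Fin n → ℝ)} (hX : Convex ℝ X) {ubar : Fin n → ℝ} (hubar : ubar ∈ X)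
    (hVI : ∀ v ∈ X, 0 ≤ (A *ᵥ ubar + b) ⬝ᵥ (v - ubar))
    {u u' : Fin n → ℝ} {d : Fin m → ℝ} (hu' : u' ∈ X)
    (hproj : ∀ v ∈ X, wnorm W (u' - (u - α • W⁻¹ *ᵥ ((A *ᵥ u + b) + B *ᵥ d)))
      ≤ wnorm W (v - (u - α • W⁻¹ *ᵥ ((A *ᵥ u + b) + B *ᵥ d)))) :
    wnorm W (u' - ubar) ≤ √(1 - 2 * α * μ + α ^ 2 * L ^ 2) * wnorm W (u - ubar)
      + α * opNorm (S⁻¹ * B) * enorm' d := by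
  set E := euclideanMulVec S
  set x := u - α • W⁻¹ *ᵥ ((A *ᵥ u + b) + B *ᵥ d)
  set y := ubar - α • W⁻¹ *ᵥ (A *ᵥ ubar + b)
  have hx : ⟪E x - E u', E ubar - E u'⟫ ≤ 0 := by
    simpa only [map_sub] using inner_le_zero_of_forall_wnorm_le hS hSW hX hu' hproj hubar
  -- `ubar` is the projection of `y`, being a fixed point of the undisturbed step
  have hy : ⟪E y - E ubar, E u' - E ubar⟫ ≤ 0 := by
    have := hVI u' hu'
    rw [← map_sub, ← map_sub, show y - ubar = -α • W⁻¹ *ᵥ (A *ᵥ ubar + b) by simp [y],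
      map_smul, real_inner_smul_left, inner_euclideanMulVec_inv_mulVec hS hSdet hSW]
    nlinarith
  have hxy : x - y = (u - ubar - α • W⁻¹ *ᵥ (A *ᵥ (u - ubar))) + (-α) • W⁻¹ *ᵥ (B *ᵥ d) := by
    simp only [x, y, mulVec_add, mulVec_sub]
    module
  calc wnorm W (u' - ubar) ≤ wnorm W (x - y) := by
        simpa only [wnorm_eq_norm hS hSW, map_sub] using norm_sub_le_of_real_inner_sub_le_zero hx hy
    _ ≤ wnorm W (u - ubar - α • W⁻¹ *ᵥ (A *ᵥ (u - ubar))) + α * wnorm W (W⁻¹ *ᵥ (B *ᵥ d)) := by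
        have hdist := wnorm_smul hS hSW (-α) (W⁻¹ *ᵥ (B *ᵥ d))
        rw [abs_neg, abs_of_nonneg hα] at hdist
        rw [hxy, ← hdist]
        exact wnorm_add_le hS hSW _ _
    _ ≤ √(1 - 2 * α * μ + α ^ 2 * L ^ 2) * wnorm W (u - ubar) + α * (opNorm (S⁻¹ * B) * enorm' d) :=
        add_le_add (wnorm_sub_smul_inv_mulVec_le hS hSdet hSW hα hmono hlip _)
          (mul_le_mul_of_nonneg_left (wnorm_inv_mulVec_mulVec_le hS hSdet hSW B d) hα)
    _ = _ := by ring

theorem wnorm_sub_le_of_variationalInequalities (hS : Sᵀ = S) (hSdet : IsUnit S.det)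
    (hSW : S * S = W) {A : Matrix (Fin n) (Fin n) ℝ} {b z : Fin n → ℝ} {μ : ℝ} (hμ : 0 < μ)
    (hmono : ∀ e, μ * wnorm W e ^ 2 ≤ e ⬝ᵥ A *ᵥ e) {ubar ustar : Fin n → ℝ}
    (hbar : 0 ≤ (A *ᵥ ubar + b) ⬝ᵥ (ustar - ubar))
    (hstar : 0 ≤ (A *ᵥ ustar + b + z) ⬝ᵥ (ubar - ustar)) :
    wnorm W (ubar - ustar) ≤ 1 / μ * enorm' (S⁻¹ *ᵥ z) := by
  set e := ubar - ustar
  have hsplit : e ⬝ᵥ A *ᵥ e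
      = z ⬝ᵥ e - (A *ᵥ ustar + b + z) ⬝ᵥ e - (A *ᵥ ubar + b) ⬝ᵥ (ustar - ubar) := by
    simp only [e, dotProduct_comm _ (A *ᵥ _), mulVec_sub, add_dotProduct, dotProduct_sub]
    ring
  have hquad : μ * wnorm W e ^ 2 ≤ enorm' (S⁻¹ *ᵥ z) * wnorm W e := by
    calc μ * wnorm W e ^ 2 ≤ z ⬝ᵥ e := by linarith [hmono e]
      _ = ⟪(WithLp.toLp 2 (S⁻¹ *ᵥ z) : EuclideanSpace ℝ (Fin n)), euclideanMulVec S e⟫ :=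
          (inner_toLp_inv_mulVec hS hSdet z e).symm
      _ ≤ enorm' (S⁻¹ *ᵥ z) * wnorm W e := by
          rw [enorm'_eq_norm, wnorm_eq_norm hS hSW]
          exact real_inner_le_norm _ _
  have he : 0 ≤ wnorm W e := Real.sqrt_nonneg _
  have hz : 0 ≤ enorm' (S⁻¹ *ᵥ z) := Real.sqrt_nonneg _
  rw [one_div_mul_eq_div, le_div_iff₀ hμ]
  nlinarith

end Weighted

theorem closed_loop_tracking_bound_general {n m : ℕ}
    (G : Matrix (Fin m) (Fin n) ℝ) (w r : Fin m → ℝ)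
    (D : Set (Fin m → ℝ)) (hD : Bornology.IsBounded D)
    (M : Matrix (Fin m) (Fin n) ℝ)
    (Q : Matrix (Fin m) (Fin m) ℝ)
    (R : Matrix (Fin n) (Fin n) ℝ)
    (W : Matrix (Fin n) (Fin n) ℝ)
    (S : Matrix (Fin n) (Fin n) ℝ) (hS : S.PosDef) (hSsq : S * S = W)
    (μt Lt : ℝ) (hμ : 0 < μt) (hL : 0 < Lt)
    (hmono : ∀ d : Fin n → ℝ, μt * (wnorm W d) ^ 2 ≤ d ⬝ᵥ (Mᵀ * Q * G + R).mulVec d)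
    (hlip : ∀ d : Fin n → ℝ,
      wnorm W (W⁻¹.mulVec ((Mᵀ * Q * G + R).mulVec d)) ≤ Lt * wnorm W d)
    (α : ℝ) (hα : α ∈ Set.Ioo 0 (2 * μt / Lt ^ 2))
    (X : Set (Fin n → ℝ)) (hXconv : Convex ℝ X)
    (ubar ustar : Fin n → ℝ) (hubar : ubar ∈ X) (hustar : ustar ∈ X)
    (hVIbar : ∀ v ∈ X,
      0 ≤ ((Mᵀ * Q * G + R).mulVec ubar + (Mᵀ * Q).mulVec (w - r)) ⬝ᵥ (v - ubar))
    (hVIstar : ∀ v ∈ X,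
      0 ≤ ((Gᵀ * Q * G + R).mulVec ustar + (Gᵀ * Q).mulVec (w - r)) ⬝ᵥ (v - ustar))
    (d : ℕ → Fin m → ℝ) (hd : ∀ k, d k ∈ D)
    (u : ℕ → Fin n → ℝ)
    (hproj : ∀ k, u (k + 1) ∈ X ∧ ∀ v ∈ X,
      wnorm W (u (k + 1) - (u k - α • W⁻¹.mulVec
          (((Mᵀ * Q * G + R).mulVec (u k) + (Mᵀ * Q).mulVec (w - r))
            + (Mᵀ * Q).mulVec (d k))))
        ≤ wnorm W (v - (u k - α • W⁻¹.mulVec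
          (((Mᵀ * Q * G + R).mulVec (u k) + (Mᵀ * Q).mulVec (w - r))
            + (Mᵀ * Q).mulVec (d k))))) :
    0 ≤ Real.sqrt (1 - 2 * α * μt + α ^ 2 * Lt ^ 2) ∧
    Real.sqrt (1 - 2 * α * μt + α ^ 2 * Lt ^ 2) < 1 ∧
    ∀ k : ℕ,
      wnorm W (u k - ustar)
        ≤ (Real.sqrt (1 - 2 * α * μt + α ^ 2 * Lt ^ 2)) ^ k * wnorm W (u 0 - ubar)
          + (α * opNorm (S⁻¹ * (Mᵀ * Q)) / (1 - Real.sqrt (1 - 2 * α * μt + α ^ 2 * Lt ^ 2)))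
            * (⨆ j : ℕ, enorm' (d j))
          + (1 / μt) * enorm' ((S⁻¹ * (G - M)ᵀ * Q).mulVec (G.mulVec ustar + w - r)) := by
  obtain ⟨hα0, hα2⟩ := hα
  have hST : Sᵀ = S := by simpa using hS.isHermitian.eq
  have hSdet : IsUnit S.det := hS.det_pos.ne'.isUnit
  set η := √(1 - 2 * α * μt + α ^ 2 * Lt ^ 2)
  set c := α * opNorm (S⁻¹ * (Mᵀ * Q)) * ⨆ j : ℕ, enorm' (d j)
  have hη1 : η < 1 := sqrt_contraction_lt_one hα0 hL hα2
  refine ⟨Real.sqrt_nonneg _, hη1, fun k => ?_⟩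
  have hαK : 0 ≤ α * opNorm (S⁻¹ * (Mᵀ * Q)) := mul_nonneg hα0.le (norm_nonneg _)
  have hstep (j : ℕ) : wnorm W (u (j + 1) - ubar) ≤ η * wnorm W (u j - ubar) + c :=
    (wnorm_step_sub_le hST hSdet hSsq hα0.le hmono hlip hXconv hubar hVIbar (hproj j).1
      (hproj j).2).trans
      (add_le_add le_rfl (mul_le_mul_of_nonneg_left (le_ciSup (bddAbove_range_enorm' hD hd) j) hαK))
  have hc : 0 ≤ c := mul_nonneg hαK (Real.iSup_nonneg fun _ => Real.sqrt_nonneg _)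
  have hF : (Gᵀ * Q * G + R) *ᵥ ustar + (Gᵀ * Q) *ᵥ (w - r)
      = (Mᵀ * Q * G + R) *ᵥ ustar + (Mᵀ * Q) *ᵥ (w - r)
        + ((G - M)ᵀ * Q) *ᵥ (G *ᵥ ustar + w - r) := by
    simp only [transpose_sub, Matrix.sub_mul, sub_mulVec, add_mulVec, mulVec_add, mulVec_sub,
      ← mulVec_mulVec]
    abel
  have hdelta := wnorm_sub_le_of_variationalInequalities hST hSdet hSsq hμ hmono
    (hVIbar ustar hustar) (hF ▸ hVIstar ubar hubar)
  rw [mulVec_mulVec, ← Matrix.mul_assoc] at hdelta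
  calc wnorm W (u k - ustar) ≤ wnorm W (u k - ubar) + wnorm W (ubar - ustar) := by
        simpa using wnorm_add_le hST hSsq (u k - ubar) (ubar - ustar)
    _ ≤ η ^ k * wnorm W (u 0 - ubar) + c / (1 - η)
          + 1 / μt * enorm' ((S⁻¹ * (G - M)ᵀ * Q) *ᵥ (G *ᵥ ustar + w - r)) :=
        add_le_add (le_pow_mul_add_div_of_le_mul_add (a := fun j => wnorm W (u j - ubar))
          (Real.sqrt_nonneg _) hη1 hc hstep k) hdelta
    _ = _ := by ring

/-- Theorem 2, first part: for the closed-loop ILC system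
y_k = Gu_k + w + d_k, u_{k+1} = Π_X^W[u_k − αW⁻¹(F̃(u_k) + MᵀQd_k)], with
H = GᵀQG + R, f = GᵀQ(w − r), H̃ = MᵀQG + R, f̃ = MᵀQ(w − r), the iterates satisfy
‖u_k − u*‖_W ≤ ηᵏ‖u_0 − ū‖_W + γ sup_j ‖d_j‖ + δ, where ū solves the VI for (H̃, f̃),
u* solves the VI for (H, f), η = √(1 − 2αμ̃ + α²L̃²) ∈ [0,1),
γ = α‖W^{-1/2}MᵀQ‖/(1 − η), and δ = (1/μ̃)‖W^{-1/2}(G − M)ᵀQ(Gu* + w − r)‖.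
S is the symmetric positive definite square root of W. -/
theorem closed_loop_tracking_bound {n m : ℕ}
    (G : Matrix (Fin m) (Fin n) ℝ) (w r : Fin m → ℝ)
    (D : Set (Fin m → ℝ)) (hD : Bornology.IsBounded D)
    (M : Matrix (Fin m) (Fin n) ℝ)
    (Q : Matrix (Fin m) (Fin m) ℝ) (hQ : Q.PosSemidef)
    (R : Matrix (Fin n) (Fin n) ℝ) (hR : R.PosSemidef)
    (W : Matrix (Fin n) (Fin n) ℝ) (hW : W.PosDef)
    (S : Matrix (Fin n) (Fin n) ℝ) (hS : S.PosDef) (hSsq : S * S = W)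
    (μt Lt : ℝ) (hμ : 0 < μt) (hL : 0 < Lt)
    (hmono : ∀ d : Fin n → ℝ, μt * (wnorm W d) ^ 2 ≤ d ⬝ᵥ (Mᵀ * Q * G + R).mulVec d)
    (hlip : ∀ d : Fin n → ℝ,
      wnorm W (W⁻¹.mulVec ((Mᵀ * Q * G + R).mulVec d)) ≤ Lt * wnorm W d)
    (α : ℝ) (hα : α ∈ Set.Ioo 0 (2 * μt / Lt ^ 2))
    (X : Set (Fin n → ℝ)) (hXne : X.Nonempty) (hXcl : IsClosed X) (hXconv : Convex ℝ X)
    (ubar ustar : Fin n → ℝ) (hubar : ubar ∈ X) (hustar : ustar ∈ X)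
    (hVIbar : ∀ v ∈ X,
      0 ≤ ((Mᵀ * Q * G + R).mulVec ubar + (Mᵀ * Q).mulVec (w - r)) ⬝ᵥ (v - ubar))
    (hVIstar : ∀ v ∈ X,
      0 ≤ ((Gᵀ * Q * G + R).mulVec ustar + (Gᵀ * Q).mulVec (w - r)) ⬝ᵥ (v - ustar))
    (d : ℕ → Fin m → ℝ) (hd : ∀ k, d k ∈ D)
    (u : ℕ → Fin n → ℝ) (hu0 : u 0 ∈ X)
    (hproj : ∀ k, u (k + 1) ∈ X ∧ ∀ v ∈ X,
      wnorm W (u (k + 1) - (u k - α • W⁻¹.mulVec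
          (((Mᵀ * Q * G + R).mulVec (u k) + (Mᵀ * Q).mulVec (w - r))
            + (Mᵀ * Q).mulVec (d k))))
        ≤ wnorm W (v - (u k - α • W⁻¹.mulVec
          (((Mᵀ * Q * G + R).mulVec (u k) + (Mᵀ * Q).mulVec (w - r))
            + (Mᵀ * Q).mulVec (d k))))) :
    0 ≤ Real.sqrt (1 - 2 * α * μt + α ^ 2 * Lt ^ 2) ∧
    Real.sqrt (1 - 2 * α * μt + α ^ 2 * Lt ^ 2) < 1 ∧
    ∀ k : ℕ,
      wnorm W (u k - ustar)
        ≤ (Real.sqrt (1 - 2 * α * μt + α ^ 2 * Lt ^ 2)) ^ k * wnorm W (u 0 - ubar)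
          + (α * opNorm (S⁻¹ * (Mᵀ * Q)) / (1 - Real.sqrt (1 - 2 * α * μt + α ^ 2 * Lt ^ 2)))
            * (⨆ j : ℕ, enorm' (d j))
          + (1 / μt) * enorm' ((S⁻¹ * (G - M)ᵀ * Q).mulVec (G.mulVec ustar + w - r)) :=
  closed_loop_tracking_bound_general G w r D hD M Q R W S hS hSsq μt Lt hμ hL hmono hlip α hα X
    hXconv ubar ustar hubar hustar hVIbar hVIstar d hd u hproj
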